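/- (L^q local Lipschitz estimate for the modified nonlinearity via L^{3q} norms.) Let (O, μ) be a measure space with μ(O) < ∞, let q ∈ [1, ∞), and let δt₀ ∈ (0,1). There exists a constant C = C(δt₀, q, μ(O)) ∈ (0,∞) such that for every δt ∈ [0, δt₀] and all measurable functions u, v : O → ℝ with finite L^{3q}(μ) norms, ‖Ψ_{δt}∘u − Ψ_{δt}∘v‖_{L^q(μ)} ≤ C·‖u − v‖_{L^{3q}(μ)}·(1 + ‖u‖_{L^{3q}(μ)}² + ‖v‖_{L^{3q}(μ)}²). -/

import Mathlib

open MeasureTheory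

/-- The drift nonlinearity `F(z) = z - z³`. -/
noncomputable def F (z : ℝ) : ℝ := z - z ^ 3

/-- The flow map `Φ_t(z) = z / sqrt(z² + (1 - z²) exp(-2t))`. -/
noncomputable def Phi (t z : ℝ) : ℝ :=
  z / Real.sqrt (z ^ 2 + (1 - z ^ 2) * Real.exp (-2 * t))

/-- The modified nonlinearity `Ψ_{δt}(z) = (Φ_{δt}(z) - z)/δt` for `δt > 0`, `Ψ_0 = F`. -/
noncomputable def Psi (δt z : ℝ) : ℝ :=
  if δt = 0 then F z else (Phi δt z - z) / δt

/-!
For `0 < δt ≤ 1` put `ε = exp (-2δt) ∈ [1/9, 1)`, so that `1 - ε ≤ 2δt`, and `s = √D` with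
`D = z² + (1 - z²)ε`. Then `Ψ'_{δt}(z) = (ε / s³ - 1) / δt`, and since
`1 - s² = (1 - ε)(1 - z²)` and `s ≥ 1/3`, the bound `|ε - s³| ≤ (1 - ε) + |1 - s²| (1 + s)`
gives `|Ψ'_{δt}(z)| ≤ 126 (1 + z²)` uniformly in `δt`, as for `F' = 1 - 3z²`. The mean value
theorem turns this into `|Ψ(a) - Ψ(b)| ≤ 126 (1 + a² + b²) |a - b|`, and Hölder's inequality for
`1/q = 2/(3q) + 1/(3q)`, with `‖u²‖_{3q/2} = ‖u‖²_{3q}`, into the `L^q` estimate.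
-/

section Pointwise

open Real

lemma abs_sub_le_of_hasDerivAt_of_abs_le {f f' : ℝ → ℝ} {K : ℝ}
    (hf : ∀ x, HasDerivAt f (f' x) x) (hf' : ∀ x, |f' x| ≤ K * (1 + x ^ 2)) (a b : ℝ) :
    |f a - f b| ≤ K * (1 + a ^ 2 + b ^ 2) * |a - b| := by
  have hbound : ∀ x ∈ Set.uIcc b a, ‖f' x‖ ≤ K * (1 + a ^ 2 + b ^ 2) := by
    intro x hx
    have hK : 0 ≤ K := by nlinarith [abs_nonneg (f' 0), hf' 0]
    have hx2 : x ^ 2 ≤ a ^ 2 + b ^ 2 := by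
      rcases Set.mem_uIcc.1 hx with ⟨h₁, h₂⟩ | ⟨h₁, h₂⟩ <;>
        nlinarith [mul_nonneg (sub_nonneg.2 h₁) (sub_nonneg.2 h₂), sq_nonneg (a - b),
          sq_nonneg (a + b)]
    calc ‖f' x‖ ≤ K * (1 + x ^ 2) := hf' x
      _ ≤ K * (1 + a ^ 2 + b ^ 2) := mul_le_mul_of_nonneg_left (by linarith) hK
  simpa only [Real.norm_eq_abs] using
    (convex_uIcc b a).norm_image_sub_le_of_norm_hasDerivWithin_le
      (fun x _ => (hf x).hasDerivWithinAt) hbound Set.left_mem_uIcc Set.right_mem_uIcc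

lemma hasDerivAt_F (z : ℝ) : HasDerivAt F (1 - 3 * z ^ 2) z := by
  refine ((hasDerivAt_id' z).sub (hasDerivAt_pow 3 z)).congr_deriv ?_
  norm_num

lemma abs_one_sub_pow_three_le {s : ℝ} (hs : 0 ≤ s) : |1 - s ^ 3| ≤ |1 - s ^ 2| * (1 + s) := by
  have h3 : 1 - s ^ 3 = (1 - s) * (1 + s + s ^ 2) := by ring
  have h2 : 1 - s ^ 2 = (1 - s) * (1 + s) := by ring
  rw [h3, h2, abs_mul, abs_mul, abs_of_pos (by positivity : 0 < 1 + s + s ^ 2),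
    abs_of_pos (by positivity : 0 < 1 + s), mul_assoc]
  gcongr
  nlinarith

lemma abs_sub_pow_three_le {ε s z : ℝ} (hε : 1 / 9 ≤ ε) (hε1 : ε ≤ 1) (hs : 0 ≤ s)
    (hs2 : s ^ 2 = z ^ 2 + (1 - z ^ 2) * ε) :
    |ε - s ^ 3| ≤ 63 * (1 - ε) * (1 + z ^ 2) * s ^ 3 := by
  have hs_ge : 1 / 3 ≤ s := by nlinarith [mul_nonneg (sq_nonneg z) (sub_nonneg.2 hε1)]
  have hD : |1 - s ^ 2| ≤ (1 - ε) * (1 + z ^ 2) := by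
    rw [hs2, show 1 - (z ^ 2 + (1 - z ^ 2) * ε) = (1 - ε) * (1 - z ^ 2) by ring, abs_mul,
      abs_of_nonneg (sub_nonneg.2 hε1)]
    gcongr
    exact (abs_sub _ _).trans (by simp)
  have h27 : 1 ≤ 27 * s ^ 3 := by nlinarith
  have h36 : 1 + s ≤ 36 * s ^ 3 := by nlinarith
  calc |ε - s ^ 3| ≤ |ε - 1| + |1 - s ^ 3| := abs_sub_le _ _ _
    _ ≤ (1 - ε) * 1 + (1 - ε) * (1 + z ^ 2) * (1 + s) := by
      rw [abs_sub_comm, abs_of_nonneg (sub_nonneg.2 hε1), mul_one]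
      gcongr
      exact (abs_one_sub_pow_three_le hs).trans (by gcongr)
    _ ≤ (1 - ε) * (27 * s ^ 3) + (1 - ε) * (1 + z ^ 2) * (36 * s ^ 3) := by
      gcongr
    _ ≤ 63 * (1 - ε) * (1 + z ^ 2) * s ^ 3 := by
      nlinarith [mul_nonneg (mul_nonneg (sub_nonneg.2 hε1) (sq_nonneg z)) (pow_nonneg hs 3)]

lemma sq_add_one_sub_sq_mul_pos {ε : ℝ} (hε : 0 < ε) (hε1 : ε ≤ 1) (z : ℝ) :
    0 < z ^ 2 + (1 - z ^ 2) * ε := by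
  nlinarith [mul_nonneg (sq_nonneg z) (sub_nonneg.2 hε1)]

lemma one_div_nine_le_exp_neg_two_mul {t : ℝ} (ht : t ≤ 1) : 1 / 9 ≤ exp (-2 * t) := by
  have h2 : exp 2 < 9 := by
    rw [show (2 : ℝ) = 1 + 1 by norm_num, exp_add]
    nlinarith [exp_one_lt_three, exp_pos 1]
  calc 1 / 9 ≤ (exp 2)⁻¹ := by rw [one_div]; exact inv_anti₀ (exp_pos 2) h2.le
    _ = exp (-2) := (exp_neg 2).symm
    _ ≤ exp (-2 * t) := exp_le_exp.2 (by linarith)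

lemma one_sub_exp_neg_two_mul_le (t : ℝ) : 1 - exp (-2 * t) ≤ 2 * t := by
  linarith [add_one_le_exp (-2 * t)]

lemma hasDerivAt_Phi {t : ℝ} (ht : 0 ≤ t) (z : ℝ) :
    HasDerivAt (Phi t) (exp (-2 * t) / √(z ^ 2 + (1 - z ^ 2) * exp (-2 * t)) ^ 3) z := by
  set ε := exp (-2 * t)
  have hD : 0 < z ^ 2 + (1 - z ^ 2) * ε :=
    sq_add_one_sub_sq_mul_pos (exp_pos _) (exp_le_one_iff.2 (by linarith)) z
  have hs : 0 < √(z ^ 2 + (1 - z ^ 2) * ε) := sqrt_pos.2 hD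
  have hs2 : √(z ^ 2 + (1 - z ^ 2) * ε) ^ 2 = z ^ 2 + (1 - z ^ 2) * ε := sq_sqrt hD.le
  have hg : HasDerivAt (fun w : ℝ => w ^ 2 + (1 - w ^ 2) * ε) (2 * z * (1 - ε)) z := by
    refine ((hasDerivAt_pow 2 z).add (((hasDerivAt_const z 1).sub
      (hasDerivAt_pow 2 z)).mul_const ε)).congr_deriv ?_
    ring
  refine ((hasDerivAt_id' z).div (hg.sqrt hD.ne') hs.ne').congr_deriv ?_
  field_simp
  linear_combination hs2

lemma abs_exp_div_sqrt_pow_three_sub_one_div_le {t : ℝ} (ht0 : 0 < t) (ht1 : t ≤ 1) (z : ℝ) :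
    |(exp (-2 * t) / √(z ^ 2 + (1 - z ^ 2) * exp (-2 * t)) ^ 3 - 1) / t| ≤ 126 * (1 + z ^ 2) := by
  set ε := exp (-2 * t)
  have hε1 : ε ≤ 1 := exp_le_one_iff.2 (by linarith)
  have hD : 0 < z ^ 2 + (1 - z ^ 2) * ε := sq_add_one_sub_sq_mul_pos (exp_pos _) hε1 z
  set s := √(z ^ 2 + (1 - z ^ 2) * ε)
  have hs3 : 0 < s ^ 3 := pow_pos (sqrt_pos.2 hD) 3
  have hcube := abs_sub_pow_three_le (one_div_nine_le_exp_neg_two_mul ht1) hε1 (sqrt_nonneg _)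
    (sq_sqrt hD.le)
  rw [div_sub_one hs3.ne', abs_div, abs_div, abs_of_pos hs3, abs_of_pos ht0, div_div,
    div_le_iff₀ (mul_pos hs3 ht0)]
  calc |ε - s ^ 3| ≤ 63 * (1 - ε) * (1 + z ^ 2) * s ^ 3 := hcube
    _ ≤ 63 * (2 * t) * (1 + z ^ 2) * s ^ 3 := by gcongr; exact one_sub_exp_neg_two_mul_le t
    _ = 126 * (1 + z ^ 2) * (s ^ 3 * t) := by ring

lemma abs_Psi_sub_le {δt : ℝ} (h0 : 0 ≤ δt) (h1 : δt ≤ 1) (a b : ℝ) :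
    |Psi δt a - Psi δt b| ≤ 126 * (1 + a ^ 2 + b ^ 2) * |a - b| := by
  rcases h0.eq_or_lt with rfl | hpos
  · have hPsi : Psi 0 = F := funext fun z => if_pos rfl
    rw [hPsi]
    refine abs_sub_le_of_hasDerivAt_of_abs_le hasDerivAt_F (fun z => ?_) a b
    rw [abs_le]
    constructor <;> nlinarith [sq_nonneg z]
  · have hPsi : Psi δt = fun z => (Phi δt z - z) / δt := funext fun z => if_neg hpos.ne'
    rw [hPsi]
    exact abs_sub_le_of_hasDerivAt_of_abs_le
      (fun z => ((hasDerivAt_Phi h0 z).sub (hasDerivAt_id' z)).div_const δt)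
      (abs_exp_div_sqrt_pow_three_sub_one_div_le hpos h1) a b

end Pointwise

open ENNReal NNReal

section LpBounds

variable {α : Type*} [MeasurableSpace α] {μ : Measure α}

lemma eLpNorm_sq (f : α → ℝ) (p : ℝ≥0∞) :
    eLpNorm (fun x => f x ^ 2) p μ = eLpNorm f (2 * p) μ ^ 2 := by
  have h := eLpNorm_norm_rpow f (p := p) (μ := μ) (q := 2) two_pos
  simp only [Real.norm_eq_abs, Real.rpow_two, sq_abs, ENNReal.ofReal_ofNat, ENNReal.rpow_two] at h
  rwa [mul_comm]

lemma eLpNorm_le_mul_eLpNorm_mul_eLpNorm_of_abs_le {p q r : ℝ≥0∞} [HolderTriple p q r]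
    {g φ w : α → ℝ} (K : ℝ≥0) (hφ : AEStronglyMeasurable φ μ) (hw : AEStronglyMeasurable w μ)
    (h : ∀ x, |g x| ≤ K * φ x * |w x|) :
    eLpNorm g r μ ≤ K * eLpNorm φ p μ * eLpNorm w q μ := by
  refine (eLpNorm_mono (g := fun x => (K : ℝ) * φ x * w x) fun x => ?_).trans
    (eLpNorm_le_eLpNorm_mul_eLpNorm_of_nnnorm hφ hw (fun a b => (K : ℝ) * a * b) K
      (.of_forall fun x => by simp [nnnorm_mul]))
  rw [Real.norm_eq_abs, Real.norm_eq_abs, abs_mul, abs_mul, NNReal.abs_eq]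
  exact (h x).trans (by gcongr; exact le_abs_self _)

lemma add_add_le_one_add_mul_one_add_add (m a b : ℝ≥0∞) : m + a + b ≤ (1 + m) * (1 + a + b) :=
  calc m + a + b ≤ m + a + b + (1 + m * a + m * b) := le_self_add
    _ = (1 + m) * (1 + a + b) := by ring

lemma eLpNorm_one_add_sq_add_sq_le {s : ℝ≥0∞} (hs : 1 ≤ s) {u v : α → ℝ}
    (hu : AEStronglyMeasurable u μ) (hv : AEStronglyMeasurable v μ) :
    eLpNorm (fun x => 1 + u x ^ 2 + v x ^ 2) s μ ≤ (1 + eLpNorm (fun _ => (1 : ℝ)) s μ) *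
      (1 + eLpNorm u (2 * s) μ ^ 2 + eLpNorm v (2 * s) μ ^ 2) := by
  have hu2 : AEStronglyMeasurable (fun x => u x ^ 2) μ := hu.pow 2
  have hv2 : AEStronglyMeasurable (fun x => v x ^ 2) μ := hv.pow 2
  have h1u : eLpNorm (fun x => 1 + u x ^ 2) s μ ≤
      eLpNorm (fun _ => (1 : ℝ)) s μ + eLpNorm (fun x => u x ^ 2) s μ :=
    eLpNorm_add_le aestronglyMeasurable_const hu2 hs
  have h1uv : eLpNorm (fun x => 1 + u x ^ 2 + v x ^ 2) s μ ≤
      eLpNorm (fun x => 1 + u x ^ 2) s μ + eLpNorm (fun x => v x ^ 2) s μ :=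
    eLpNorm_add_le (aestronglyMeasurable_const.add hu2) hv2 hs
  rw [eLpNorm_sq] at h1u h1uv
  exact h1uv.trans ((add_le_add h1u le_rfl).trans (add_add_le_one_add_mul_one_add_add _ _ _))

lemma eLpNorm_le_of_abs_le_one_add_sq_add_sq_mul_abs_sub {s p : ℝ≥0∞} (hs : 1 ≤ s)
    [HolderTriple s (2 * s) p] {g u v : α → ℝ} (K : ℝ≥0) (hu : AEStronglyMeasurable u μ)
    (hv : AEStronglyMeasurable v μ) (h : ∀ x, |g x| ≤ K * (1 + u x ^ 2 + v x ^ 2) * |u x - v x|) :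
    eLpNorm g p μ ≤ K * (1 + eLpNorm (fun _ => (1 : ℝ)) s μ) *
      eLpNorm (fun x => u x - v x) (2 * s) μ *
        (1 + eLpNorm u (2 * s) μ ^ 2 + eLpNorm v (2 * s) μ ^ 2) := by
  have hφ : AEStronglyMeasurable (fun x => 1 + u x ^ 2 + v x ^ 2) μ :=
    (aestronglyMeasurable_const.add (hu.pow 2)).add (hv.pow 2)
  calc eLpNorm g p μ
      ≤ K * eLpNorm (fun x => 1 + u x ^ 2 + v x ^ 2) s μ *
          eLpNorm (fun x => u x - v x) (2 * s) μ :=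
        eLpNorm_le_mul_eLpNorm_mul_eLpNorm_of_abs_le K hφ (hu.sub hv) h
    _ ≤ K * ((1 + eLpNorm (fun _ => (1 : ℝ)) s μ) *
          (1 + eLpNorm u (2 * s) μ ^ 2 + eLpNorm v (2 * s) μ ^ 2)) *
          eLpNorm (fun x => u x - v x) (2 * s) μ := by
        gcongr
        exact eLpNorm_one_add_sq_add_sq_le hs hu hv
    _ = _ := by ring

end LpBounds

lemma holderTriple_ofReal_three_mul_div_two {q : ℝ} (hq : 0 < q) :
    HolderTriple (ENNReal.ofReal (3 * q / 2)) (ENNReal.ofReal (3 * q)) (ENNReal.ofReal q) := ⟨by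
  rw [← ofReal_inv_of_pos (by positivity), ← ofReal_inv_of_pos (by positivity),
    ← ofReal_inv_of_pos hq, ← ofReal_add (by positivity) (by positivity)]
  congr 1
  field_simp
  ring⟩

/-- `L^q` local Lipschitz estimate for the modified nonlinearity via `L^{3q}` norms:
on a finite measure space, for `q ∈ [1,∞)` and `δt₀ ∈ (0,1)` there is
`C = C(δt₀, q, μ(O)) > 0` such that for all `δt ∈ [0, δt₀]` and all measurable
`u, v` with finite `L^{3q}` norms,
`‖Ψ_{δt}∘u - Ψ_{δt}∘v‖_{L^q} ≤ C ‖u - v‖_{L^{3q}} (1 + ‖u‖_{L^{3q}}² + ‖v‖_{L^{3q}}²)`. -/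
theorem psi_Lq_local_lipschitz {O : Type*} [MeasurableSpace O] (μ : Measure O)
    [IsFiniteMeasure μ] (q : ℝ) (hq : 1 ≤ q) (δt₀ : ℝ) (h₀ : δt₀ ∈ Set.Ioo (0 : ℝ) 1) :
    ∃ C : ℝ, 0 < C ∧ ∀ δt ∈ Set.Icc (0 : ℝ) δt₀, ∀ u v : O → ℝ,
      Measurable u → Measurable v →
      eLpNorm u (ENNReal.ofReal (3 * q)) μ < ⊤ →
      eLpNorm v (ENNReal.ofReal (3 * q)) μ < ⊤ →
      eLpNorm (fun x => Psi δt (u x) - Psi δt (v x)) (ENNReal.ofReal q) μ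
        ≤ ENNReal.ofReal C * eLpNorm (fun x => u x - v x) (ENNReal.ofReal (3 * q)) μ *
          (1 + eLpNorm u (ENNReal.ofReal (3 * q)) μ ^ 2 +
            eLpNorm v (ENNReal.ofReal (3 * q)) μ ^ 2) := by
  have hq0 : 0 < q := by linarith
  set s := ENNReal.ofReal (3 * q / 2)
  have hs : 1 ≤ s := ENNReal.one_le_ofReal.2 (by linarith)
  have h2s : 2 * s = ENNReal.ofReal (3 * q) := by
    rw [← ofReal_ofNat 2, ← ofReal_mul zero_le_two]
    ring_nf
  have : HolderTriple s (2 * s) (ENNReal.ofReal q) := by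
    rw [h2s]; exact holderTriple_ofReal_three_mul_div_two hq0
  set m := eLpNorm (fun _ : O => (1 : ℝ)) s μ
  have hm : m ≠ ⊤ := (memLp_const (1 : ℝ)).eLpNorm_ne_top
  refine ⟨126 * (1 + m.toReal), by positivity, fun δt hδt u v hu hv _ _ => ?_⟩
  have hC : ENNReal.ofReal (126 * (1 + m.toReal)) = ((126 : ℝ≥0) : ℝ≥0∞) * (1 + m) := by
    rw [ofReal_mul (by norm_num), ofReal_add zero_le_one toReal_nonneg, ofReal_one,
      ofReal_toReal hm]
    norm_num
  rw [hC, ← h2s]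
  exact eLpNorm_le_of_abs_le_one_add_sq_add_sq_mul_abs_sub hs 126 hu.aestronglyMeasurable
    hv.aestronglyMeasurable fun x => by
      exact_mod_cast abs_Psi_sub_le hδt.1 (hδt.2.trans h₀.2.le) (u x) (v x)
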